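/- arXiv:2506.10222 — 3 statements merged into one kernel-verified Lean document; each statement's English description precedes it below -/
import Mathlib

section
/- Suppose S' is a child of S in the ordinarization tree T_g, and write S' = S \ {a} ∪ {b} with a ∈ S and b ∈ ℕ \ S. Then a is an effective generator of S, and ⌈m(S)/2⌉ ≤ b ≤ m(S) − 1. -/
/-- A numerical semigroup: a subset of ℕ containing 0, closed under addition,
with finite complement. -/
def IsNumericalSemigroup (S : Set ℕ) : Prop :=
  0 ∈ S ∧ (∀ a ∈ S, ∀ b ∈ S, a + b ∈ S) ∧ Sᶜ.Finite

/-- The genus: the number of gaps. -/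
noncomputable def genus (S : Set ℕ) : ℕ := Sᶜ.ncard

/-- The Frobenius number: the largest gap. -/
noncomputable def frob (S : Set ℕ) : ℕ := sSup Sᶜ

/-- The multiplicity: the smallest nonzero element. -/
noncomputable def mult (S : Set ℕ) : ℕ := sInf (S \ {0})

/-- The ordinary numerical semigroup of genus `g`: `{0, g+1, g+2, ...}`. -/
def ordinary (g : ℕ) : Set ℕ := {0} ∪ {n | g + 1 ≤ n}

/-- The ordinarization transform `S ∪ {F(S)} \ {m(S)}`. -/
noncomputable def transform (S : Set ℕ) : Set ℕ := (S ∪ {frob S}) \ {mult S}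

/-- A minimal generator: a nonzero element of `S` that is not a sum of two
nonzero elements of `S`. -/
def IsMinGen (S : Set ℕ) (m : ℕ) : Prop :=
  m ∈ S ∧ m ≠ 0 ∧ ¬ ∃ u ∈ S, ∃ v ∈ S, u ≠ 0 ∧ v ≠ 0 ∧ u + v = m

/-- The set of effective generators: minimal generators larger than the
Frobenius number. -/
noncomputable def eg (S : Set ℕ) : Set ℕ := {m | IsMinGen S m ∧ frob S < m}

/-- The number of effective generators. -/
noncomputable def hEff (S : Set ℕ) : ℕ := (eg S).ncard

/-- `S'` is a child of `S` in the ordinarization tree: `S'` is a numerical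
semigroup, not the ordinary semigroup of its genus, and its ordinarization
transform is `S`. -/
def IsChild (S' S : Set ℕ) : Prop :=
  IsNumericalSemigroup S' ∧ S' ≠ ordinary (genus S') ∧ transform S' = S


/-! Put `T = transform S'`, `m = mult S'` and `F = frob S'`. A non-ordinary semigroup has `m < F`,
so `T` swaps the gap `F` for the element `m`; hence `a = F` and `b = m`. Every gap of `T` lies
below `F`, and a decomposition `F = u + v` in `T` would already hold in `S'`, where `F` is a gap:
so `F` is an effective generator of `T`. Finally `m < mult T ≤ 2m`, since `2m ∈ S'` survives the
transform. -/

section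

variable {S : Set ℕ} {n : ℕ}

theorem mult_le (hn : n ∈ S) (hn0 : n ≠ 0) : mult S ≤ n :=
  Nat.sInf_le ⟨hn, hn0⟩

theorem mem_transform : n ∈ transform S ↔ (n ∈ S ∨ n = frob S) ∧ n ≠ mult S :=
  Iff.rfl

theorem frob_mem_transform (h : mult S < frob S) : frob S ∈ transform S :=
  mem_transform.2 ⟨Or.inr rfl, h.ne'⟩

theorem mem_of_mem_transform_of_lt (hn : n ∈ transform S) (hnF : n < frob S) : n ∈ S :=
  (mem_transform.1 hn).1.resolve_right hnF.ne

theorem mult_lt_mult_transform (h : mult S < frob S) : mult S < mult (transform S) := by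
  have hne : (transform S \ {0}).Nonempty := ⟨_, frob_mem_transform h, show frob S ≠ 0 by omega⟩
  obtain ⟨hmT, hmT0⟩ : mult (transform S) ∈ transform S \ {0} := Nat.sInf_mem hne
  obtain ⟨hmT | hmT, hmT_ne⟩ := mem_transform.1 hmT
  · exact lt_of_le_of_ne (mult_le hmT hmT0) hmT_ne.symm
  · exact hmT ▸ h

namespace IsNumericalSemigroup

theorem le_frob (hS : IsNumericalSemigroup S) (hn : n ∉ S) : n ≤ frob S :=
  le_csSup hS.2.2.bddAbove hn

theorem frob_notMem (hS : IsNumericalSemigroup S) (hF : frob S ≠ 0) : frob S ∉ S := by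
  have hgaps : Sᶜ.Nonempty := by
    by_contra hempty
    rw [Set.not_nonempty_iff_eq_empty] at hempty
    exact hF (by rw [frob, hempty, csSup_empty]; rfl)
  exact Nat.sSup_mem hgaps hS.2.2.bddAbove

theorem mult_mem_diff_zero (hS : IsNumericalSemigroup S) : mult S ∈ S \ {0} :=
  Nat.sInf_mem ((compl_compl S ▸ hS.2.2.infinite_compl).sdiff (Set.finite_singleton 0)).nonempty

theorem eq_ordinary_of_frob_lt_mult (hS : IsNumericalSemigroup S) (h : frob S < mult S) :
    S = ordinary (genus S) := by
  have hcompl : Sᶜ = Set.Icc 1 (frob S) := by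
    ext k
    simp only [Set.mem_compl_iff, Set.mem_Icc]
    refine ⟨fun hk => ⟨Nat.pos_of_ne_zero (fun h0 => hk (h0 ▸ hS.1)), hS.le_frob hk⟩, ?_⟩
    rintro ⟨hk1, hkF⟩ hk
    have := mult_le hk (by omega)
    omega
  have hgenus : genus S = frob S := by
    rw [genus, hcompl, ← Finset.coe_Icc, Set.ncard_coe_finset, Nat.card_Icc]
    omega
  ext k
  rw [hgenus, ← not_iff_not, ← Set.mem_compl_iff, hcompl]
  simp only [ordinary, Set.mem_Icc, Set.mem_union, Set.mem_singleton_iff]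
  change _ ↔ ¬(k = 0 ∨ frob S + 1 ≤ k)
  omega

theorem mult_lt_frob_of_ne_ordinary (hS : IsNumericalSemigroup S)
    (h : S ≠ ordinary (genus S)) : mult S < frob S := by
  by_contra! hle
  rcases hle.lt_or_eq with hlt | heq
  · exact h (hS.eq_ordinary_of_frob_lt_mult hlt)
  · have hm := hS.mult_mem_diff_zero
    exact hS.frob_notMem (heq ▸ hm.2) (heq ▸ hm.1)

section Transform

variable (hS : IsNumericalSemigroup S) (h : mult S < frob S)
include hS h

theorem lt_frob_of_notMem_transform (hn : n ∉ transform S) : n < frob S := by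
  rw [mem_transform] at hn
  by_cases hnm : n = mult S
  · exact hnm ▸ h
  · have hnS : n ∉ S := fun hnS => hn ⟨Or.inl hnS, hnm⟩
    exact lt_of_le_of_ne (hS.le_frob hnS) (fun hnF => hn ⟨Or.inr hnF, hnm⟩)

theorem frob_transform_lt : frob (transform S) < frob S := by
  have hm : mult S ∉ transform S := fun hm => (mem_transform.1 hm).2 rfl
  have hle : frob (transform S) ≤ frob S - 1 :=
    csSup_le ⟨_, hm⟩ fun k hk => Nat.le_sub_one_of_lt (hS.lt_frob_of_notMem_transform h hk)
  omega

theorem frob_mem_eg_transform : frob S ∈ eg (transform S) := by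
  refine ⟨⟨frob_mem_transform h, by omega, ?_⟩, hS.frob_transform_lt h⟩
  rintro ⟨u, hu, v, hv, hu0, hv0, huv⟩
  have huS := mem_of_mem_transform_of_lt hu (by omega)
  have hvS := mem_of_mem_transform_of_lt hv (by omega)
  exact hS.frob_notMem (by omega) (huv ▸ hS.2.1 u huS v hvS)

end Transform

theorem mult_transform_le_two_mul (hS : IsNumericalSemigroup S) :
    mult (transform S) ≤ 2 * mult S := by
  obtain ⟨hm, hm0⟩ := hS.mult_mem_diff_zero
  have hm0 : mult S ≠ 0 := hm0
  have h2m : 2 * mult S ∈ transform S :=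
    mem_transform.2 ⟨Or.inl (two_mul (mult S) ▸ hS.2.1 _ hm _ hm), by omega⟩
  exact mult_le h2m (by omega)

end IsNumericalSemigroup

end

theorem stmt_2_general (S S' : Set ℕ) (a b : ℕ)
    (hchild : IsChild S' S)
    (ha : a ∈ S) (hb : b ∉ S) (hS'eq : S' = (S \ {a}) ∪ {b}) :
    a ∈ eg S ∧ (mult S + 1) / 2 ≤ b ∧ b ≤ mult S - 1 := by
  obtain ⟨hS', hne, rfl⟩ := hchild
  have hlt := hS'.mult_lt_frob_of_ne_ordinary hne
  have haS' : a ∉ S' := by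
    rw [hS'eq]
    rintro (⟨-, h⟩ | h)
    exacts [h rfl, hb (h ▸ ha)]
  have hfrob : frob S' = a := ((mem_transform.1 ha).1.resolve_left haS').symm
  have hmult : mult S' = b := by
    by_contra h
    exact hb (mem_transform.2 ⟨Or.inl (hS'eq ▸ Or.inr rfl), Ne.symm h⟩)
  refine ⟨hfrob ▸ hS'.frob_mem_eg_transform hlt, ?_, ?_⟩
  · have := hS'.mult_transform_le_two_mul
    omega
  · have := mult_lt_mult_transform hlt
    omega

theorem stmt_2 (g : ℕ) (S S' : Set ℕ) (a b : ℕ)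
    (hS : IsNumericalSemigroup S) (hgS : genus S = g) (hgS' : genus S' = g)
    (hchild : IsChild S' S)
    (ha : a ∈ S) (hb : b ∉ S) (hS'eq : S' = (S \ {a}) ∪ {b}) :
    a ∈ eg S ∧ (mult S + 1) / 2 ≤ b ∧ b ≤ mult S - 1 :=
  stmt_2_general S S' a b hchild ha hb hS'eq
end

section
/- Let S = ⟨a, b⟩ where 2 ≤ a < b, gcd(a, b) = 1, and a is odd. Then 0 ≤ r(S) − ((ab − a − 4)/8 − (b + 3)/(8a)) ≤ a/4 − 1/(4a). -/
/-- The ordinarization number: `r(S) = #(S ∩ {1, ..., g(S)})`. -/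
noncomputable def ordNum (S : Set ℕ) : ℕ := (S ∩ Set.Icc 1 (genus S)).ncard


/-!
Every element of `S = ⟨a, b⟩` is uniquely `a x + b y` with `y < a`, so counting the admissible
`x` for each `y` gives `#(S ∩ [0, N]) = ∑_{y < a} ⌊(N + a - b y) / a⌋`. At the Frobenius number
`N = ab - a - b` the sum is `∑_{y < a} ⌊b y / a⌋ = (a - 1)(b - 1) / 2` (pair `y` with `a - y`);
as `[0, N]` has `(a - 1)(b - 1)` elements, this is also the genus, `g = c (b - 1)` for
`a = 2c + 1`. At `N = g` only
`y < c` contributes, and writing `g - b y = a q_y + r_y` gives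
`2a (r(S) + 1) + 2 ∑ r_y + b c (c - 1) = 2ac + 2cg`. As `b` is invertible mod `a`, the `r_y` are
`c` distinct residues in `[0, a)`, so `c (c - 1) ≤ 2 ∑ r_y ≤ c (3c + 1)`, which is exactly the
claimed window for `r(S)`.
-/

open Finset

theorem Finset.card_mul_card_sub_one_le_two_mul_sum (T : Finset ℕ) :
    #T * (#T - 1) ≤ 2 * ∑ t ∈ T, t := by
  induction T using Finset.induction_on_max with
  | empty => simp
  | insert m T hlt ih =>
    have hm : m ∉ T := fun h => lt_irrefl m (hlt m h)
    have hcard : #T ≤ m := by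
      simpa using card_le_card fun t ht => mem_range.2 (hlt t ht)
    rw [card_insert_of_notMem hm, sum_insert hm, Nat.add_sub_cancel]
    rcases Nat.eq_zero_or_pos #T with h | h
    · simp [h]
    · obtain ⟨k, hk⟩ : ∃ k, #T = k + 1 := ⟨#T - 1, by omega⟩
      rw [hk] at ih hcard ⊢
      simp only [Nat.add_sub_cancel] at ih
      nlinarith

theorem Finset.two_mul_sum_add_card_mul_card_add_one_le {A : ℕ} (T : Finset ℕ)
    (hT : ∀ t ∈ T, t < A) : 2 * ∑ t ∈ T, t + #T * (#T + 1) ≤ 2 * A * #T := by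
  have hinj : Set.InjOn (fun t => A - 1 - t) T := fun x hx y hy h => by
    have := hT x hx; have := hT y hy; simp only at h; omega
  have hreflect : ∑ t ∈ T.image (fun t => A - 1 - t), t + ∑ t ∈ T, t = #T * (A - 1) := by
    rw [sum_image hinj, ← sum_add_distrib,
      sum_congr rfl fun t ht => Nat.sub_add_cancel (by have := hT t ht; omega), sum_const,
      smul_eq_mul]
  have hlow := (T.image fun t => A - 1 - t).card_mul_card_sub_one_le_two_mul_sum
  rw [card_image_of_injOn hinj] at hlow
  have hcard : #T ≤ A := by simpa using card_le_card fun t ht => mem_range.2 (hT t ht)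
  rcases Nat.eq_zero_or_pos #T with h | h
  · simp [card_eq_zero.1 h]
  · obtain ⟨k, hk⟩ : ∃ k, #T = k + 1 := ⟨#T - 1, by omega⟩
    obtain ⟨B, rfl⟩ : ∃ B, A = B + 1 := ⟨A - 1, by omega⟩
    rw [hk] at hlow hreflect hcard ⊢
    simp only [Nat.add_sub_cancel] at hlow hreflect
    nlinarith

theorem ordNum_add_one {S : Set ℕ} (h0 : 0 ∈ S) :
    ordNum S + 1 = (S ∩ Set.Iic (genus S)).ncard := by
  have hinsert : S ∩ Set.Iic (genus S) = insert 0 (S ∩ Set.Icc 1 (genus S)) := by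
    ext m
    simp only [Set.mem_inter_iff, Set.mem_Iic, Set.mem_insert_iff, Set.mem_Icc]
    constructor
    · rintro ⟨hm, hmg⟩
      rcases Nat.eq_zero_or_pos m with rfl | hm0
      · exact Or.inl rfl
      · exact Or.inr ⟨hm, hm0, hmg⟩
    · rintro (rfl | ⟨hm, -, hmg⟩)
      · exact ⟨h0, Nat.zero_le _⟩
      · exact ⟨hm, hmg⟩
  rw [hinsert, Set.ncard_insert_of_notMem (by simp) ((Set.finite_Icc _ _).inter_of_right S),
    ordNum]

def pairSemigroup (a b : ℕ) : Set ℕ := {m | ∃ x y : ℕ, a * x + b * y = m}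

section PairSemigroup

variable {a b : ℕ}

theorem exists_mul_add_mul_eq_of_lt (ha : 0 < a) {m : ℕ} (hm : m ∈ pairSemigroup a b) :
    ∃ x y, y < a ∧ a * x + b * y = m := by
  obtain ⟨x, y, rfl⟩ := hm
  refine ⟨x + b * (y / a), y % a, Nat.mod_lt _ ha, ?_⟩
  conv_rhs => rw [← Nat.div_add_mod y a]
  ring

theorem eq_of_mul_add_mul_eq (hcop : a.Coprime b) {x y x' y' : ℕ} (hy : y < a) (hy' : y' < a)
    (h : a * x + b * y = a * x' + b * y') : x = x' ∧ y = y' := by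
  have hmod : b * y ≡ b * y' [MOD a] := by
    simpa [Nat.ModEq, Nat.mul_add_mod] using congrArg (· % a) h
  obtain rfl : y = y' := (hmod.cancel_left_of_coprime hcop).eq_of_lt_of_lt hy hy'
  exact ⟨Nat.eq_of_mul_eq_mul_left (Nat.zero_lt_of_lt hy) (by omega), rfl⟩

theorem lt_add_sub_div_iff (ha : 0 < a) {x k N : ℕ} : x < (N + a - k) / a ↔ a * x + k ≤ N := by
  rw [← Nat.add_one_le_iff, Nat.le_div_iff_mul_le ha, add_mul, one_mul, mul_comm]
  omega

theorem pairSemigroup_inter_Iic (ha : 0 < a) (N : ℕ) :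
    pairSemigroup a b ∩ Set.Iic N =
      ↑((range a).biUnion fun y => (range ((N + a - b * y) / a)).image (a * · + b * y)) := by
  ext m
  simp only [Set.mem_inter_iff, Set.mem_Iic, coe_biUnion, coe_image, coe_range, Set.mem_iUnion,
    Set.mem_image, Set.mem_Iio, lt_add_sub_div_iff ha, exists_prop]
  constructor
  · rintro ⟨hm, hmN⟩
    obtain ⟨x, y, hy, rfl⟩ := exists_mul_add_mul_eq_of_lt ha hm
    exact ⟨y, hy, x, hmN, rfl⟩
  · rintro ⟨y, -, x, hx, rfl⟩
    exact ⟨⟨x, y, rfl⟩, hx⟩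

/-- The `y`-th summand counts the `x` with `a x + b y ≤ N`; truncated subtraction makes it `0`
when `b y > N`. -/
theorem ncard_pairSemigroup_inter_Iic (hcop : a.Coprime b) (ha : 0 < a) (N : ℕ) :
    (pairSemigroup a b ∩ Set.Iic N).ncard = ∑ y ∈ range a, (N + a - b * y) / a := by
  rw [pairSemigroup_inter_Iic ha, Set.ncard_coe_finset, card_biUnion]
  · refine sum_congr rfl fun y _ => ?_
    rw [card_image_of_injective _ fun x x' h => Nat.eq_of_mul_eq_mul_left ha (by simpa using h),
      card_range]
  · intro y hy y' hy' hne
    refine disjoint_left.2 fun m hm hm' => hne ?_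
    simp only [mem_image] at hm hm'
    obtain ⟨x, -, rfl⟩ := hm
    obtain ⟨x', -, h⟩ := hm'
    exact (eq_of_mul_add_mul_eq hcop (mem_range.1 hy') (mem_range.1 hy) h).2.symm

theorem mul_div_add_mul_sub_div (hcop : a.Coprime b) {y : ℕ} (hy0 : 0 < y) (hya : y < a) :
    b * y / a + b * (a - y) / a + 1 = b := by
  have hsum : b * y + b * (a - y) = a * b := by
    rw [← mul_add, Nat.add_sub_cancel' hya.le, mul_comm]
  have hndvd : ¬ a ∣ b * y := fun h =>
    (Nat.le_of_dvd hy0 (hcop.dvd_of_dvd_mul_left h)).not_gt hya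
  have := Nat.add_div_eq_of_le_mod_add_mod
    (Nat.le_mod_add_mod_of_dvd_add_of_not_dvd (hsum ▸ dvd_mul_right a b) hndvd) (by omega)
  rw [hsum, Nat.mul_div_cancel_left b (by omega)] at this
  omega

theorem two_mul_sum_range_mul_div (hcop : a.Coprime b) :
    2 * ∑ y ∈ range a, b * y / a = (a - 1) * (b - 1) := by
  rcases Nat.eq_zero_or_pos a with rfl | ha
  · simp
  have hreflect : ∑ y ∈ Ico 1 a, b * (a - y) / a = ∑ y ∈ Ico 1 a, b * y / a := by
    rw [sum_Ico_reflect (fun y => b * y / a) 1 (Nat.le_succ a), Nat.add_sub_cancel_left,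
      Nat.add_sub_cancel]
  rw [range_eq_Ico, sum_eq_sum_Ico_succ_bot ha, mul_zero, Nat.zero_div, zero_add, two_mul]
  have hpair : ∀ y ∈ Ico 1 a, b * (a - y) / a + b * y / a = b - 1 := fun y hy => by
    have := mul_div_add_mul_sub_div hcop (mem_Ico.1 hy).1 (mem_Ico.1 hy).2
    exact Nat.eq_sub_of_add_eq (by linarith)
  nth_rw 1 [← hreflect]
  rw [← sum_add_distrib, sum_congr rfl hpair]
  simp

theorem frobenius_lt_mem_pairSemigroup (hcop : a.Coprime b) (ha : 1 < a) (hb : 1 < b) {m : ℕ}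
    (hm : a * b - a - b < m) : m ∈ pairSemigroup a b := by
  obtain ⟨x, y, h⟩ := (AddSubmonoid.mem_closure_pair _ _ _).1
    ((frobeniusNumber_iff.1 (frobeniusNumber_pair hcop ha hb)).2 m hm)
  exact ⟨x, y, by simpa [mul_comm] using h⟩

theorem two_mul_genus_pairSemigroup (hcop : a.Coprime b) (ha : 1 < a) (hb : 1 < b) :
    2 * genus (pairSemigroup a b) = (a - 1) * (b - 1) := by
  set F := a * b - a - b
  have hF : (a - 1) * (b - 1) = F + 1 := by
    have := Nat.add_le_mul ha hb
    rw [Nat.sub_one_mul, Nat.mul_sub_one]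
    omega
  have hcompl : (pairSemigroup a b)ᶜ = Set.Iic F \ (pairSemigroup a b ∩ Set.Iic F) := by
    ext m
    by_cases hm : m ∈ pairSemigroup a b
    · simp [hm]
    · simp only [Set.mem_compl_iff, Set.mem_sdiff, Set.mem_Iic, Set.mem_inter_iff, hm,
        not_false_eq_true, false_and, and_true, true_iff]
      by_contra h
      exact hm (frobenius_lt_mem_pairSemigroup hcop ha hb (not_le.1 h))
  have hcount : (pairSemigroup a b ∩ Set.Iic F).ncard = ∑ y ∈ range a, b * y / a := by
    rw [ncard_pairSemigroup_inter_Iic hcop (by omega), ← sum_range_reflect]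
    refine sum_congr rfl fun y hy => congrArg (· / a) ?_
    have hby : b * y ≤ b * (a - 1) := Nat.mul_le_mul_left b (by simp at hy; omega)
    have := Nat.add_le_mul ha hb
    rw [Nat.mul_sub_one, mul_comm b a] at hby
    rw [Nat.mul_sub, Nat.mul_sub_one, mul_comm b a]
    omega
  have hsplit := Set.ncard_sdiff_add_ncard_of_subset
    (Set.inter_subset_right (s := pairSemigroup a b)) (Set.finite_Iic F)
  rw [← hcompl, hcount, Set.ncard_Iic_nat] at hsplit
  have := two_mul_sum_range_mul_div hcop
  rw [genus]
  omega

theorem mul_le_of_lt_of_mul_le_add {N k y : ℕ} (hy : y < k) (hk : b * k ≤ N + b) : b * y ≤ N := by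
  have : b * (y + 1) ≤ b * k := Nat.mul_le_mul_left b hy
  rw [mul_add_one] at this
  omega

theorem sum_range_add_sub_mul_div {N k : ℕ} (hka : k ≤ a) (hN : N < b * k)
    (hk : b * k ≤ N + b) :
    ∑ y ∈ range a, (N + a - b * y) / a = k + ∑ y ∈ range k, (N - b * y) / a := by
  have ha : 0 < a := lt_of_lt_of_le (Nat.pos_of_ne_zero (by rintro rfl; simp at hN)) hka
  have hbelow : ∀ y ∈ range k, (N + a - b * y) / a = (N - b * y) / a + 1 := fun y hy => by
    have := mul_le_of_lt_of_mul_le_add (mem_range.1 hy) hk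
    rw [← Nat.add_div_right _ (by omega)]
    congr 1
    omega
  have habove : ∀ y ∈ Ico k a, (N + a - b * y) / a = 0 := fun y hy => by
    have : b * k ≤ b * y := Nat.mul_le_mul_left b (mem_Ico.1 hy).1
    exact Nat.div_eq_of_lt (by omega)
  rw [← sum_range_add_sum_Ico _ hka, sum_congr rfl hbelow, sum_congr rfl habove, sum_add_distrib]
  simp [add_comm]

theorem injOn_sub_mul_mod (hcop : a.Coprime b) {N k : ℕ} (hka : k ≤ a) (hk : b * k ≤ N + b) :
    Set.InjOn (fun y => (N - b * y) % a) (range k) := by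
  intro y hy y' hy' h
  simp only [coe_range, Set.mem_Iio] at hy hy'
  have hmod : N - b * y + (b * y + b * y') ≡ N - b * y' + (b * y + b * y') [MOD a] :=
    Nat.ModEq.add_right _ h
  have hby := mul_le_of_lt_of_mul_le_add hy hk
  have hby' := mul_le_of_lt_of_mul_le_add hy' hk
  rw [show N - b * y + (b * y + b * y') = N + b * y' by omega,
    show N - b * y' + (b * y + b * y') = N + b * y by omega] at hmod
  exact ((Nat.ModEq.add_left_cancel' N hmod).cancel_left_of_coprime hcop).symm.eq_of_lt_of_lt
    (by omega) (by omega)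

theorem exists_two_mul_ordNum_eq (hcop : a.Coprime b) {c : ℕ} (ha : a = 2 * c + 1) (hc : 0 < c)
    (hab : a < b) :
    ∃ R, c * (c - 1) ≤ 2 * R ∧ 2 * R + c * (c + 1) ≤ 2 * a * c ∧
      2 * (a * (ordNum (pairSemigroup a b) + 1) + R) + b * (c * (c - 1)) =
        2 * (a * c + c * (c * (b - 1))) := by
  set g := c * (b - 1)
  have hgenus : genus (pairSemigroup a b) = g := by
    have := two_mul_genus_pairSemigroup hcop (by omega) (by omega)
    rw [show a - 1 = 2 * c by omega, mul_assoc] at this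
    omega
  have hbg : b * c ≤ g + b := by
    simp only [g, Nat.mul_sub_one, mul_comm c b]
    have : c ≤ b * c := Nat.le_mul_of_pos_left c (by omega)
    omega
  have hcount : ordNum (pairSemigroup a b) + 1 = c + ∑ y ∈ range c, (g - b * y) / a := by
    rw [ordNum_add_one (S := pairSemigroup a b) ⟨0, 0, rfl⟩, hgenus,
      ncard_pairSemigroup_inter_Iic hcop (by omega), sum_range_add_sub_mul_div (by omega) _ hbg]
    simp only [g, Nat.mul_sub_one, mul_comm c b]
    have : 0 < b * c := Nat.mul_pos (by omega) hc
    omega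
  have hinj := injOn_sub_mul_mod hcop (by omega : c ≤ a) hbg
  have hdivmod : a * ∑ y ∈ range c, (g - b * y) / a + ∑ y ∈ range c, (g - b * y) % a
      + b * ∑ y ∈ range c, y = c * g := by
    rw [mul_sum, mul_sum, ← sum_add_distrib, ← sum_add_distrib, sum_congr rfl fun y hy => ?_,
      sum_const, card_range, smul_eq_mul]
    have := mul_le_of_lt_of_mul_le_add (mem_range.1 hy) hbg
    rw [Nat.div_add_mod]
    omega
  refine ⟨∑ y ∈ range c, (g - b * y) % a, ?_, ?_, ?_⟩
  · have := ((range c).image fun y => (g - b * y) % a).card_mul_card_sub_one_le_two_mul_sum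
    rwa [card_image_of_injOn hinj, card_range, sum_image hinj] at this
  · have := ((range c).image fun y => (g - b * y) % a).two_mul_sum_add_card_mul_card_add_one_le
      (A := a) (by simp only [mem_image]; rintro _ ⟨y, -, rfl⟩; exact Nat.mod_lt _ (by omega))
    rwa [card_image_of_injOn hinj, card_range, sum_image hinj] at this
  · have := sum_range_id_mul_two c
    rw [hcount]
    nlinarith

end PairSemigroup

theorem stmt_12 (a b : ℕ) (ha : 2 ≤ a) (hab : a < b) (hcop : Nat.Coprime a b)
    (hodd : Odd a)
    (S : Set ℕ) (hS : S = {m | ∃ x y : ℕ, a * x + b * y = m}) :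
    0 ≤ (ordNum S : ℚ) -
        (((a : ℚ) * b - a - 4) / 8 - ((b : ℚ) + 3) / (8 * a)) ∧
      (ordNum S : ℚ) -
        (((a : ℚ) * b - a - 4) / 8 - ((b : ℚ) + 3) / (8 * a)) ≤
        (a : ℚ) / 4 - 1 / (4 * a) := by
  obtain ⟨c, hc⟩ := hodd
  obtain rfl : S = pairSemigroup a b := hS
  obtain ⟨R, hRlow, hRup, hid⟩ := exists_two_mul_ordNum_eq hcop hc (by omega) hab
  have hc1 : 1 ≤ c := by omega
  have hb1 : 1 ≤ b := by omega
  qify [hc1, hb1] at hRlow hRup hid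
  have haQ : (a : ℚ) = 2 * c + 1 := by exact_mod_cast hc
  have hpos : (0 : ℚ) < 8 * a := by rw [haQ]; positivity
  have hdiff : (ordNum (pairSemigroup a b) : ℚ) -
      (((a : ℚ) * b - a - 4) / 8 - ((b : ℚ) + 3) / (8 * a)) =
        (12 * c ^ 2 + 4 * c - 8 * R) / (8 * a) := by
    rw [eq_div_iff hpos.ne']
    field_simp
    rw [haQ] at hid ⊢
    linear_combination 4 * hid
  rw [hdiff, show (a : ℚ) / 4 - 1 / (4 * a) = (2 * a ^ 2 - 2) / (8 * a) by field_simp; ring]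
  constructor
  · apply div_nonneg _ hpos.le
    rw [haQ] at hRup
    linarith
  · rw [div_le_div_iff_of_pos_right hpos, haQ]
    linarith
end

section
/- Let a and x be positive integers with x < a − 1, let S = ⟨a, a+1, ..., a+x⟩ be the numerical semigroup generated by the interval {a, a+1, ..., a+x}, and write n = ⌈(a−1)/x⌉. Then the ordinarization number of S is r(S) = ((n²−1)/8)x + (n−1)/2 if n is odd, and r(S) = (−n(3n−2)/8)x + (n/2)(a−1) if n is even. -/
open Finset

def intervalSemigroup (a x : ℕ) : Set ℕ := {m | ∃ k, k * a ≤ m ∧ m ≤ k * (a + x)}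

def gapBlock (a x k : ℕ) : Finset ℕ := Ioo (k * (a + x)) ((k + 1) * a)

def gapFinset (a x N : ℕ) : Finset ℕ := (range N).biUnion (gapBlock a x)

theorem ordNum_add_ncard_Icc_diff (S : Set ℕ) :
    ordNum S + (Set.Icc 1 (genus S) \ S).ncard = genus S := by
  rw [ordNum, Set.inter_comm, Set.ncard_inter_add_ncard_sdiff_eq_ncard _ _ (Set.finite_Icc _ _),
    ← coe_Icc, Set.ncard_coe_finset, Nat.card_Icc, Nat.add_sub_cancel]

theorem setOf_sum_eq_intervalSemigroup (a x : ℕ) :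
    {m | ∃ cc : Fin (x + 1) → ℕ, ∑ i, cc i * (a + (i : ℕ)) = m} = intervalSemigroup a x := by
  ext m
  constructor
  · rintro ⟨cc, rfl⟩
    refine ⟨∑ i, cc i, ?_, ?_⟩ <;> rw [sum_mul] <;> refine sum_le_sum fun i _ => ?_
    · exact Nat.mul_le_mul_left _ (Nat.le_add_right a i)
    · exact Nat.mul_le_mul_left _ (by omega)
  · rintro ⟨k, hlo, hhi⟩
    induction k generalizing m with
    | zero => exact ⟨0, by simp_all⟩
    | succ k ih =>
      -- peel off one generator `a + i`, as large as possible but at most `a + x`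
      set i := min x (m - (k + 1) * a)
      have h₁ : (k + 1) * a = k * a + a := Nat.succ_mul k a
      have h₂ : (k + 1) * (a + x) = k * (a + x) + (a + x) := Nat.succ_mul k (a + x)
      have h₃ : k * a ≤ k * (a + x) := Nat.mul_le_mul_left k (Nat.le_add_right a x)
      obtain ⟨cc, hcc⟩ := ih (m - (a + i)) (by omega) (by omega)
      refine ⟨cc + Pi.single ⟨i, by omega⟩ 1, ?_⟩
      simp only [Pi.add_apply, Pi.single_apply, add_mul, ite_mul, one_mul, zero_mul,
        sum_add_distrib, hcc, sum_ite_eq', mem_univ, ↓reduceIte]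
      omega

section IntervalSemigroup

variable {a x : ℕ}

theorem notMem_intervalSemigroup_iff (ha : 0 < a) {m : ℕ} :
    m ∉ intervalSemigroup a x ↔ ∃ k, m ∈ gapBlock a x k := by
  simp only [intervalSemigroup, gapBlock, Set.mem_ofPred_eq, mem_Ioo, not_exists, not_and,
    not_le]
  constructor
  · intro h
    exact ⟨m / a, h _ (Nat.div_mul_le_self m a), by
      rw [Nat.succ_mul]; exact Nat.lt_div_mul_add ha⟩
  · rintro ⟨k, hk₁, hk₂⟩ j hj
    have hjk : j ≤ k := Nat.le_of_lt_succ (Nat.lt_of_mul_lt_mul_right (hj.trans_lt hk₂))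
    exact (Nat.mul_le_mul_right _ hjk).trans_lt hk₁

theorem card_gapBlock (k : ℕ) : #(gapBlock a x k) = a - 1 - k * x := by
  rw [gapBlock, Nat.card_Ioo, Nat.succ_mul, mul_add]
  omega

theorem lt_of_mem_gapBlock {k l m m' : ℕ} (hkl : k < l) (hm : m ∈ gapBlock a x k)
    (hm' : m' ∈ gapBlock a x l) : m < m' := by
  rw [gapBlock, mem_Ioo] at hm hm'
  have h₁ : (k + 1) * a ≤ (k + 1) * (a + x) := Nat.mul_le_mul_left _ (Nat.le_add_right a x)
  have h₂ : (k + 1) * (a + x) ≤ l * (a + x) := Nat.mul_le_mul_right _ hkl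
  omega

theorem pairwiseDisjoint_gapBlock (s : Set ℕ) : s.PairwiseDisjoint (gapBlock a x) := by
  intro k _ l _ hkl
  rw [Function.onFun, disjoint_left]
  intro m hm hm'
  rcases hkl.lt_or_gt with h | h
  · exact (lt_of_mem_gapBlock h hm hm').ne rfl
  · exact (lt_of_mem_gapBlock h hm' hm).ne rfl

theorem lt_of_mem_gapFinset {N m : ℕ} (hm : m ∈ gapFinset a x N) : m < N * a := by
  obtain ⟨k, hk, hm⟩ := mem_biUnion.mp hm
  rw [gapBlock, mem_Ioo] at hm
  exact hm.2.trans_le (Nat.mul_le_mul_right _ (mem_range.mp hk))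

theorem card_gapFinset (N : ℕ) : #(gapFinset a x N) = ∑ k ∈ range N, (a - 1 - k * x) := by
  rw [gapFinset, card_biUnion (pairwiseDisjoint_gapBlock _)]
  simp only [card_gapBlock]

theorem cast_card_gapFinset {N : ℕ} (hN : N * x < a - 1 + x) :
    (#(gapFinset a x N) : ℚ) = N * ((a - 1 : ℕ) : ℚ) - N * (N - 1) / 2 * x := by
  have gauss : ∀ M : ℕ, ∑ k ∈ range M, (k : ℚ) = M * (M - 1) / 2 := by
    intro M
    induction M with
    | zero => simp
    | succ M ih => rw [sum_range_succ, ih]; push_cast; ring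
  have hterm : ∀ k ∈ range N, ((a - 1 - k * x : ℕ) : ℚ) = ((a - 1 : ℕ) : ℚ) - k * x := by
    intro k hk
    have : (k + 1) * x ≤ N * x := Nat.mul_le_mul_right _ (mem_range.mp hk)
    rw [Nat.cast_sub (by rw [Nat.succ_mul] at this; omega)]
    push_cast
    ring
  rw [card_gapFinset, Nat.cast_sum, sum_congr rfl hterm, sum_sub_distrib, sum_const, card_range,
    nsmul_eq_mul, ← sum_mul, gauss]

theorem compl_intervalSemigroup {N : ℕ} (ha : 0 < a) (hN : a - 1 ≤ N * x) :
    (intervalSemigroup a x)ᶜ = ↑(gapFinset a x N) := by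
  ext m
  rw [Set.mem_compl_iff, notMem_intervalSemigroup_iff ha, gapFinset, coe_biUnion]
  simp only [coe_range, Set.mem_iUnion, Set.mem_Iio, mem_coe, exists_prop]
  refine ⟨fun ⟨k, hk⟩ => ⟨k, ?_, hk⟩, fun ⟨k, _, hk⟩ => ⟨k, hk⟩⟩
  by_contra! hNk
  -- blocks with `a - 1 ≤ k x` are empty
  have : N * x ≤ k * x := Nat.mul_le_mul_right _ hNk
  rw [gapBlock, mem_Ioo, Nat.succ_mul, mul_add] at hk
  omega

theorem genus_intervalSemigroup {N : ℕ} (ha : 0 < a) (hN : a - 1 ≤ N * x) :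
    genus (intervalSemigroup a x) = #(gapFinset a x N) := by
  rw [genus, compl_intervalSemigroup ha hN, Set.ncard_coe_finset]

theorem Icc_diff_intervalSemigroup {t c : ℕ} (ha : 0 < a) (hc₁ : t * a ≤ c + 1)
    (hc₂ : c < (t + 1) * a) :
    Set.Icc 1 c \ intervalSemigroup a x = ↑(gapFinset a x t ∪ Ioc (t * (a + x)) c) := by
  ext m
  rw [Set.mem_sdiff, notMem_intervalSemigroup_iff ha, coe_union, Set.mem_union, mem_coe,
    mem_coe, mem_Ioc, Set.mem_Icc]
  constructor
  · rintro ⟨⟨-, hmc⟩, k, hk⟩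
    rcases lt_trichotomy k t with hkt | rfl | hkt
    · exact Or.inl (mem_biUnion.mpr ⟨k, mem_range.mpr hkt, hk⟩)
    · exact Or.inr ⟨(mem_Ioo.mp hk).1, hmc⟩
    · have h₁ : (t + 1) * a ≤ (t + 1) * (a + x) := Nat.mul_le_mul_left _ (Nat.le_add_right a x)
      have h₂ : (t + 1) * (a + x) ≤ k * (a + x) := Nat.mul_le_mul_right _ hkt
      rw [gapBlock, mem_Ioo] at hk
      omega
  · rintro (hm | ⟨hm₁, hm₂⟩)
    · obtain ⟨k, -, hk⟩ := mem_biUnion.mp hm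
      have := lt_of_mem_gapFinset hm
      exact ⟨⟨by rw [gapBlock, mem_Ioo] at hk; omega, by omega⟩, k, hk⟩
    · exact ⟨⟨by omega, hm₂⟩, t, mem_Ioo.mpr ⟨hm₁, by omega⟩⟩

theorem ncard_Icc_diff_intervalSemigroup {t c : ℕ} (ha : 0 < a) (hc₁ : t * a ≤ c + 1)
    (hc₂ : c < (t + 1) * a) :
    (Set.Icc 1 c \ intervalSemigroup a x).ncard = #(gapFinset a x t) + (c - t * (a + x)) := by
  have hdisj : Disjoint (gapFinset a x t) (Ioc (t * (a + x)) c) := by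
    refine disjoint_left.mpr fun m hm hm' => ?_
    have h₁ := lt_of_mem_gapFinset hm
    have h₂ : t * a ≤ t * (a + x) := Nat.mul_le_mul_left _ (Nat.le_add_right a x)
    rw [mem_Ioc] at hm'
    omega
  rw [Icc_diff_intervalSemigroup ha hc₁ hc₂, Set.ncard_coe_finset, card_union_of_disjoint hdisj,
    Nat.card_Ioc]

theorem ordNum_intervalSemigroup_add {t : ℕ} (ha : 0 < a)
    (hg₁ : t * a ≤ genus (intervalSemigroup a x) + 1)
    (hg₂ : genus (intervalSemigroup a x) < (t + 1) * a) :
    ordNum (intervalSemigroup a x) + #(gapFinset a x t)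
      + (genus (intervalSemigroup a x) - t * (a + x)) = genus (intervalSemigroup a x) := by
  rw [add_assoc, ← ncard_Icc_diff_intervalSemigroup ha hg₁ hg₂, ordNum_add_ncard_Icc_diff]

end IntervalSemigroup

section Parity

variable {b x t : ℕ}

theorem cast_genus_intervalSemigroup {N : ℕ} (hlo : b ≤ N * x) (hhi : N * x < b + x) :
    (genus (intervalSemigroup (b + 1) x) : ℚ) = N * b - N * (N - 1) / 2 * x := by
  rw [genus_intervalSemigroup b.add_one_pos (by simpa), cast_card_gapFinset (by simpa),
    Nat.add_sub_cancel]

theorem ordNum_intervalSemigroup_of_even (hlo : b ≤ 2 * t * x) (hhi : 2 * t * x < b + x) :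
    (ordNum (intervalSemigroup (b + 1) x) : ℚ) = t * b - t * (3 * t - 1) / 2 * x := by
  have hg := cast_genus_intervalSemigroup hlo hhi
  have hG := cast_card_gapFinset (a := b + 1) (x := x) (N := t)
    (by rw [Nat.add_sub_cancel]; nlinarith)
  rw [Nat.add_sub_cancel] at hG
  set g := genus (intervalSemigroup (b + 1) x) with hg_def
  have hlo' : (b : ℚ) ≤ 2 * t * x := by exact_mod_cast hlo
  have hhi' : 2 * t * x + 1 ≤ (b : ℚ) + x := by exact_mod_cast hhi
  have ht : (0 : ℚ) ≤ t := t.cast_nonneg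
  have hg₁ : t * (b + 1) ≤ g + 1 := by
    qify; rw [hg]; push_cast
    nlinarith [mul_nonneg ht (by linarith : (0 : ℚ) ≤ b + x - 2 * t * x - 1)]
  have hg₂ : g ≤ t * (b + 1 + x) := by
    qify; rw [hg]; push_cast
    nlinarith [mul_nonneg ht (by linarith : (0 : ℚ) ≤ 2 * t * x - b)]
  have hg₃ : g < (t + 1) * (b + 1) := by
    qify; rw [hg]; push_cast
    rcases t.eq_zero_or_pos with rfl | ht₁
    · linarith [(b.cast_nonneg : (0 : ℚ) ≤ b)]
    · have : (1 : ℚ) ≤ t := by exact_mod_cast ht₁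
      nlinarith [mul_nonneg (sub_nonneg.2 this) (by linarith : (0 : ℚ) ≤ 2 * t * x - b)]
  have key := ordNum_intervalSemigroup_add b.add_one_pos hg₁ hg₃
  rw [← hg_def, Nat.sub_eq_zero_of_le hg₂, add_zero] at key
  qify at key
  push_cast at hg
  linarith

theorem ordNum_intervalSemigroup_of_odd (hlo : b ≤ (2 * t + 1) * x)
    (hhi : (2 * t + 1) * x < b + x) :
    (ordNum (intervalSemigroup (b + 1) x) : ℚ) = t + t * (t + 1) / 2 * x := by
  have hg := cast_genus_intervalSemigroup hlo hhi
  have hG := cast_card_gapFinset (a := b + 1) (x := x) (N := t)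
    (by rw [Nat.add_sub_cancel]; nlinarith)
  rw [Nat.add_sub_cancel] at hG
  set g := genus (intervalSemigroup (b + 1) x) with hg_def
  have hlo' : (b : ℚ) ≤ (2 * t + 1) * x := by exact_mod_cast hlo
  have hhi' : (2 * t + 1) * x + 1 ≤ (b : ℚ) + x := by exact_mod_cast hhi
  have ht : (0 : ℚ) ≤ t := t.cast_nonneg
  have hg₁ : t * (b + 1 + x) ≤ g := by
    qify; rw [hg]; push_cast
    nlinarith [mul_nonneg ht (by linarith : (0 : ℚ) ≤ b + x - (2 * t + 1) * x - 1)]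
  have hg₂ : g < (t + 1) * (b + 1) := by
    qify; rw [hg]; push_cast
    nlinarith [mul_nonneg ht (by linarith : (0 : ℚ) ≤ (2 * t + 1) * x - b)]
  have key := ordNum_intervalSemigroup_add b.add_one_pos
    ((Nat.mul_le_mul_left t (Nat.le_add_right _ x)).trans (hg₁.trans g.le_succ)) hg₂
  rw [← hg_def] at key
  qify [hg₁] at key
  push_cast at hg
  linarith

end Parity

theorem stmt_19_general (a x : ℕ) (ha : 0 < a) (hx : 0 < x)
    (S : Set ℕ)
    (hS : S = {m | ∃ cc : Fin (x + 1) → ℕ, ∑ i, cc i * (a + (i : ℕ)) = m})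
    (n : ℕ) (hn : n = (a - 1 + x - 1) / x) :
    (ordNum S : ℚ) =
      if Odd n then ((n : ℚ)^2 - 1) / 8 * x + ((n : ℚ) - 1) / 2
      else (n : ℚ) / 2 * ((a : ℚ) - 1) - (n : ℚ) * (3 * (n : ℚ) - 2) / 8 * x := by
  obtain ⟨b, rfl⟩ : ∃ b, a = b + 1 := ⟨a - 1, by omega⟩
  rw [Nat.add_sub_cancel] at hn
  have hlo : b ≤ n * x := by
    have := Nat.lt_div_mul_add (a := b + x - 1) hx
    rw [← hn] at this
    omega
  have hhi : n * x < b + x := by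
    have := Nat.div_mul_le_self (b + x - 1) x
    rw [← hn] at this
    omega
  rw [hS, setOf_sum_eq_intervalSemigroup]
  rcases Nat.even_or_odd' n with ⟨t, rfl | rfl⟩
  · rw [if_neg (Nat.not_odd_iff_even.mpr (even_two_mul t)),
      ordNum_intervalSemigroup_of_even hlo hhi]
    push_cast
    ring
  · rw [if_pos (odd_two_mul_add_one t), ordNum_intervalSemigroup_of_odd hlo hhi]
    push_cast
    ring

theorem stmt_19 (a x : ℕ) (ha : 0 < a) (hx : 0 < x) (hxa : x < a - 1)
    (S : Set ℕ)
    (hS : S = {m | ∃ cc : Fin (x + 1) → ℕ, ∑ i, cc i * (a + (i : ℕ)) = m})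
    (n : ℕ) (hn : n = (a - 1 + x - 1) / x) :
    (ordNum S : ℚ) =
      if Odd n then ((n : ℚ)^2 - 1) / 8 * x + ((n : ℚ) - 1) / 2
      else (n : ℚ) / 2 * ((a : ℚ) - 1) - (n : ℚ) * (3 * (n : ℚ) - 2) / 8 * x :=
  stmt_19_general a x ha hx S hS n hn
end
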